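/- Suppose the coefficient functions are constant matrices A ∈ ℝ^{n×n}, B ∈ ℝ^{n×m}, C ∈ ℝ^{m×m}, D ∈ ℝ^{m×n}, and set Λ := [[A+BΦ₀, B], [−(Φ₀A+CΦ₀+Φ₀BΦ₀+D), −(C+Φ₀B)]] ∈ ℝ^{(n+m)×(n+m)}. Assume that for every t ∈ [0,T] the lower-right m×m block of the matrix exponential exp(tΛ) has positive determinant. Then φ(t) := Φ₀ − [ (exp((T−t)Λ))₂₂ ]⁻¹ · (exp((T−t)Λ))₂₁ is differentiable on [0,T] and satisfies the Riccati terminal value problem: φ'(t) + φ(t)A + Cφ(t) + φ(t)Bφ(t) + D = 0 for all t ∈ [0,T] and φ(T) = Φ₀. (Paper's Proposition 2.4.) -/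

import Mathlib

/-!
Radon's lemma: if `E' = E M` and `[X Y]` is the lower block row of `E` with `Y` invertible, then
`ψ = Y⁻¹ X` satisfies the Riccati equation `ψ' = ψ M₁₁ + M₂₁ - ψ M₁₂ ψ - M₂₂ ψ`.
For `E(s) = exp((T - s) Λ)` we have `E' = E (-Λ)` and `ψ(T) = 0`, and the blocks of `Λ` are
chosen so that `φ = Φ₀ - ψ` then solves the given Riccati equation with `φ(T) = Φ₀`.
-/

open Set Matrix

attribute [local instance] Matrix.normedAddCommGroup Matrix.normedSpace

theorem Matrix.toBlocks₂₁_mul_fromBlocks {k l m n o α : Type*} [Fintype l] [Fintype m]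
    [NonUnitalNonAssocSemiring α] (M : Matrix (k ⊕ o) (l ⊕ m) α)
    (P : Matrix l n α) (Q : Matrix l o α) (R : Matrix m n α) (S : Matrix m o α) :
    (M * fromBlocks P Q R S).toBlocks₂₁ = M.toBlocks₂₁ * P + M.toBlocks₂₂ * R := by
  conv_lhs => rw [← fromBlocks_toBlocks M, fromBlocks_multiply, toBlocks_fromBlocks₂₁]

theorem Matrix.toBlocks₂₂_mul_fromBlocks {k l m n o α : Type*} [Fintype l] [Fintype m]
    [NonUnitalNonAssocSemiring α] (M : Matrix (k ⊕ o) (l ⊕ m) α)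
    (P : Matrix l n α) (Q : Matrix l o α) (R : Matrix m n α) (S : Matrix m o α) :
    (M * fromBlocks P Q R S).toBlocks₂₂ = M.toBlocks₂₁ * Q + M.toBlocks₂₂ * S := by
  conv_lhs => rw [← fromBlocks_toBlocks M, fromBlocks_multiply, toBlocks_fromBlocks₂₂]

theorem hasDerivAt_matrix {𝕜 m n : Type*} [NontriviallyNormedField 𝕜] [Fintype n]
    {f : 𝕜 → Matrix m n 𝕜} {f' : Matrix m n 𝕜} {x : 𝕜} :
    HasDerivAt f f' x ↔ ∀ i j, HasDerivAt (fun y => f y i j) (f' i j) x :=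
  hasDerivAt_pi.trans (forall_congr' fun _ => hasDerivAt_pi)

section Calculus

variable {𝕜 : Type*} [NontriviallyNormedField 𝕜] {k l m n : Type*} {x : 𝕜}

theorem HasDerivAt.matrix_mul [Fintype m] [Fintype n] {f : 𝕜 → Matrix l m 𝕜}
    {g : 𝕜 → Matrix m n 𝕜} {f' : Matrix l m 𝕜} {g' : Matrix m n 𝕜} (hf : HasDerivAt f f' x)
    (hg : HasDerivAt g g' x) :
    HasDerivAt (fun y => f y * g y) (f' * g x + f x * g') x := by
  rw [hasDerivAt_matrix] at hf hg ⊢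
  intro i p
  simpa only [Matrix.mul_apply, Matrix.add_apply, ← Finset.sum_add_distrib] using
    HasDerivAt.fun_sum fun j _ => (hf i j).fun_mul (hg j p)

theorem HasDerivAt.matrix_toBlocks₂₁ [Fintype l] [Fintype n]
    {f : 𝕜 → Matrix (k ⊕ m) (l ⊕ n) 𝕜} {f' : Matrix (k ⊕ m) (l ⊕ n) 𝕜} (hf : HasDerivAt f f' x) :
    HasDerivAt (fun y => (f y).toBlocks₂₁) f'.toBlocks₂₁ x :=
  hasDerivAt_matrix.2 fun i j => hasDerivAt_matrix.1 hf (.inr i) (.inl j)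

theorem HasDerivAt.matrix_toBlocks₂₂ [Fintype l] [Fintype n]
    {f : 𝕜 → Matrix (k ⊕ m) (l ⊕ n) 𝕜} {f' : Matrix (k ⊕ m) (l ⊕ n) 𝕜} (hf : HasDerivAt f f' x) :
    HasDerivAt (fun y => (f y).toBlocks₂₂) f'.toBlocks₂₂ x :=
  hasDerivAt_matrix.2 fun i j => hasDerivAt_matrix.1 hf (.inr i) (.inr j)

/- The entrywise sup norm is not submultiplicative, so the ring-level calculus lemmas are applied
through the `ℓ∞`-operator norm, whose uniformity is definitionally the product one. -/
theorem HasDerivAt.matrix_inv [CompleteSpace 𝕜] [Fintype m] [DecidableEq m]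
    {f : 𝕜 → Matrix m m 𝕜} {f' : Matrix m m 𝕜} (hf : HasDerivAt f f' x) (hx : IsUnit (f x)) :
    HasDerivAt (fun y => (f y)⁻¹) (-((f x)⁻¹ * f' * (f x)⁻¹)) x := by
  let R : NormedRing (Matrix m m 𝕜) := Matrix.linftyOpNormedRing
  let := Matrix.linftyOpNormedAlgebra (n := m) (α := 𝕜) (R := 𝕜)
  have : @CompleteSpace (Matrix m m 𝕜) R.toUniformSpace := FiniteDimensional.complete 𝕜 _
  have h := (hasFDerivAt_ringInverse (𝕜 := 𝕜) hx.unit).comp_hasDerivAt x hf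
  rw [show Ring.inverse ∘ f = fun y => (f y)⁻¹ from
    funext fun y => (Matrix.nonsing_inv_eq_ringInverse (f y)).symm] at h
  refine h.congr_deriv ?_
  rw [_root_.neg_apply, ContinuousLinearMap.mulLeftRight_apply, Matrix.coe_units_inv,
    hx.unit_spec, Matrix.mul_assoc]

theorem Matrix.hasDerivAt_exp_smul_const {𝕂 : Type*} [RCLike 𝕂] [Fintype m] [DecidableEq m]
    (Λ : Matrix m m 𝕂) (t : 𝕂) :
    HasDerivAt (fun u : 𝕂 => NormedSpace.exp (u • Λ)) (NormedSpace.exp (t • Λ) * Λ) t := by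
  let R : NormedRing (Matrix m m 𝕂) := Matrix.linftyOpNormedRing
  let := Matrix.linftyOpNormedAlgebra (n := m) (α := 𝕂) (R := 𝕂)
  have : @CompleteSpace (Matrix m m 𝕂) R.toUniformSpace := FiniteDimensional.complete 𝕂 _
  exact _root_.hasDerivAt_exp_smul_const Λ t

theorem Matrix.hasDerivAt_exp_sub_smul {𝕂 : Type*} [RCLike 𝕂] [Fintype m] [DecidableEq m]
    (Λ : Matrix m m 𝕂) (T t : 𝕂) :
    HasDerivAt (fun s : 𝕂 => NormedSpace.exp ((T - s) • Λ))
      (NormedSpace.exp ((T - t) • Λ) * -Λ) t := by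
  have h := (Matrix.hasDerivAt_exp_smul_const Λ (T - t)).scomp t
    ((hasDerivAt_id t).const_sub T)
  rwa [neg_one_smul, ← Matrix.mul_neg] at h

theorem HasDerivAt.matrix_inv_mul_of_linear [CompleteSpace 𝕜] [Fintype m] [DecidableEq m]
    [Fintype n] {X : 𝕜 → Matrix m n 𝕜} {Y : 𝕜 → Matrix m m 𝕜} {P : Matrix n n 𝕜}
    {Q : Matrix n m 𝕜} {R : Matrix m n 𝕜} {S : Matrix m m 𝕜}
    (hX : HasDerivAt X (X x * P + Y x * R) x)
    (hY : HasDerivAt Y (X x * Q + Y x * S) x) (hYx : IsUnit (Y x)) :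
    HasDerivAt (fun y => (Y y)⁻¹ * X y)
      ((Y x)⁻¹ * X x * P + R - (Y x)⁻¹ * X x * Q * ((Y x)⁻¹ * X x)
        - S * ((Y x)⁻¹ * X x)) x := by
  have hdet := (Matrix.isUnit_iff_isUnit_det _).1 hYx
  refine ((hY.matrix_inv hYx).matrix_mul hX).congr_deriv ?_
  simp only [Matrix.mul_add, Matrix.add_mul, Matrix.neg_mul, Matrix.mul_assoc,
    Matrix.nonsing_inv_mul_cancel_left _ _ hdet]
  abel

theorem HasDerivAt.toBlocks₂₂_inv_mul_toBlocks₂₁ [CompleteSpace 𝕜] [Fintype m] [DecidableEq m]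
    [Fintype n] {E : 𝕜 → Matrix (n ⊕ m) (n ⊕ m) 𝕜} {P : Matrix n n 𝕜} {Q : Matrix n m 𝕜}
    {R : Matrix m n 𝕜} {S : Matrix m m 𝕜} (hE : HasDerivAt E (E x * fromBlocks P Q R S) x)
    (hx : IsUnit (E x).toBlocks₂₂) :
    HasDerivAt (fun y => (E y).toBlocks₂₂⁻¹ * (E y).toBlocks₂₁)
      ((E x).toBlocks₂₂⁻¹ * (E x).toBlocks₂₁ * P + R
        - (E x).toBlocks₂₂⁻¹ * (E x).toBlocks₂₁ * Q * ((E x).toBlocks₂₂⁻¹ * (E x).toBlocks₂₁)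
        - S * ((E x).toBlocks₂₂⁻¹ * (E x).toBlocks₂₁)) x := by
  have h₂₁ := hE.matrix_toBlocks₂₁
  have h₂₂ := hE.matrix_toBlocks₂₂
  rw [toBlocks₂₁_mul_fromBlocks] at h₂₁
  rw [toBlocks₂₂_mul_fromBlocks] at h₂₂
  exact HasDerivAt.matrix_inv_mul_of_linear (P := P) (Q := Q) (R := R) (S := S) h₂₁ h₂₂ hx

end Calculus

/- The substitution `φ = Φ₀ - ψ`: this identity is where the blocks of `Λ` come from. -/
theorem riccati_shift {m n α : Type*} [Fintype m] [Fintype n] [Ring α]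
    (A : Matrix n n α) (B : Matrix n m α) (C : Matrix m m α) (D : Matrix m n α)
    (Φ₀ ψ : Matrix m n α) :
    -(ψ * -(A + B * Φ₀) + (Φ₀ * A + C * Φ₀ + Φ₀ * B * Φ₀ + D) - ψ * -B * ψ - (C + Φ₀ * B) * ψ)
      = -((Φ₀ - ψ) * A + C * (Φ₀ - ψ) + (Φ₀ - ψ) * B * (Φ₀ - ψ) + D) := by
  simp only [Matrix.mul_neg, Matrix.neg_mul, Matrix.mul_add, Matrix.add_mul, Matrix.mul_sub,
    Matrix.sub_mul, Matrix.mul_assoc]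
  abel

theorem riccati_via_matrix_exponential_general
    {n m : ℕ} {T : ℝ}
    (A : Matrix (Fin n) (Fin n) ℝ) (B : Matrix (Fin n) (Fin m) ℝ)
    (C : Matrix (Fin m) (Fin m) ℝ) (D : Matrix (Fin m) (Fin n) ℝ)
    (Φ₀ : Matrix (Fin m) (Fin n) ℝ)
    (Λ : Matrix (Fin n ⊕ Fin m) (Fin n ⊕ Fin m) ℝ)
    (hΛ : Λ = Matrix.fromBlocks (A + B * Φ₀) B
        (-(Φ₀ * A + C * Φ₀ + Φ₀ * B * Φ₀ + D)) (-(C + Φ₀ * B)))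
    (hdet : ∀ t ∈ Icc (0 : ℝ) T, 0 < ((NormedSpace.exp (t • Λ)).toBlocks₂₂).det) :
    (∀ t ∈ Icc (0 : ℝ) T,
      HasDerivAt
        (fun s => Φ₀ - ((NormedSpace.exp ((T - s) • Λ)).toBlocks₂₂)⁻¹
            * (NormedSpace.exp ((T - s) • Λ)).toBlocks₂₁)
        (-((Φ₀ - ((NormedSpace.exp ((T - t) • Λ)).toBlocks₂₂)⁻¹
              * (NormedSpace.exp ((T - t) • Λ)).toBlocks₂₁) * A
            + C * (Φ₀ - ((NormedSpace.exp ((T - t) • Λ)).toBlocks₂₂)⁻¹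
              * (NormedSpace.exp ((T - t) • Λ)).toBlocks₂₁)
            + (Φ₀ - ((NormedSpace.exp ((T - t) • Λ)).toBlocks₂₂)⁻¹
              * (NormedSpace.exp ((T - t) • Λ)).toBlocks₂₁) * B
              * (Φ₀ - ((NormedSpace.exp ((T - t) • Λ)).toBlocks₂₂)⁻¹
                * (NormedSpace.exp ((T - t) • Λ)).toBlocks₂₁)
            + D)) t)
    ∧ Φ₀ - ((NormedSpace.exp ((T - T) • Λ)).toBlocks₂₂)⁻¹
        * (NormedSpace.exp ((T - T) • Λ)).toBlocks₂₁ = Φ₀ := by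
  refine ⟨fun t ht => ?_, ?_⟩
  · have hunit : IsUnit (NormedSpace.exp ((T - t) • Λ)).toBlocks₂₂ :=
      (isUnit_iff_isUnit_det _).2
        (hdet (T - t) ⟨by linarith [ht.2], by linarith [ht.1]⟩).ne'.isUnit
    have hΛneg : -Λ = fromBlocks (-(A + B * Φ₀)) (-B)
        (Φ₀ * A + C * Φ₀ + Φ₀ * B * Φ₀ + D) (C + Φ₀ * B) := by
      rw [hΛ, fromBlocks_neg, neg_neg, neg_neg]
    have hE := Matrix.hasDerivAt_exp_sub_smul Λ T t
    rw [hΛneg] at hE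
    exact ((hE.toBlocks₂₂_inv_mul_toBlocks₂₁ hunit).const_sub Φ₀).congr_deriv
      (riccati_shift A B C D Φ₀ _)
  · rw [sub_self, zero_smul, NormedSpace.exp_zero, ← fromBlocks_one, toBlocks_fromBlocks₂₁,
      Matrix.mul_zero, sub_zero]

/-- Paper's Proposition 2.4: in the constant-coefficient case, with
`Λ = [[A + B Φ₀, B], [-(Φ₀ A + C Φ₀ + Φ₀ B Φ₀ + D), -(C + Φ₀ B)]]`, if the lower-right
`m × m` block of `exp(t Λ)` has positive determinant for every `t ∈ [0, T]`, then
`φ(t) := Φ₀ - (exp((T - t) Λ))₂₂⁻¹ * (exp((T - t) Λ))₂₁` solves the Riccati terminal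
value problem `φ' + φ A + C φ + φ B φ + D = 0`, `φ(T) = Φ₀`. -/
theorem riccati_via_matrix_exponential
    {n m : ℕ} {T : ℝ} (hT : 0 < T)
    (A : Matrix (Fin n) (Fin n) ℝ) (B : Matrix (Fin n) (Fin m) ℝ)
    (C : Matrix (Fin m) (Fin m) ℝ) (D : Matrix (Fin m) (Fin n) ℝ)
    (Φ₀ : Matrix (Fin m) (Fin n) ℝ)
    (Λ : Matrix (Fin n ⊕ Fin m) (Fin n ⊕ Fin m) ℝ)
    (hΛ : Λ = Matrix.fromBlocks (A + B * Φ₀) B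
        (-(Φ₀ * A + C * Φ₀ + Φ₀ * B * Φ₀ + D)) (-(C + Φ₀ * B)))
    (hdet : ∀ t ∈ Icc (0 : ℝ) T, 0 < ((NormedSpace.exp (t • Λ)).toBlocks₂₂).det) :
    (∀ t ∈ Icc (0 : ℝ) T,
      HasDerivAt
        (fun s => Φ₀ - ((NormedSpace.exp ((T - s) • Λ)).toBlocks₂₂)⁻¹
            * (NormedSpace.exp ((T - s) • Λ)).toBlocks₂₁)
        (-((Φ₀ - ((NormedSpace.exp ((T - t) • Λ)).toBlocks₂₂)⁻¹
              * (NormedSpace.exp ((T - t) • Λ)).toBlocks₂₁) * A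
            + C * (Φ₀ - ((NormedSpace.exp ((T - t) • Λ)).toBlocks₂₂)⁻¹
              * (NormedSpace.exp ((T - t) • Λ)).toBlocks₂₁)
            + (Φ₀ - ((NormedSpace.exp ((T - t) • Λ)).toBlocks₂₂)⁻¹
              * (NormedSpace.exp ((T - t) • Λ)).toBlocks₂₁) * B
              * (Φ₀ - ((NormedSpace.exp ((T - t) • Λ)).toBlocks₂₂)⁻¹
                * (NormedSpace.exp ((T - t) • Λ)).toBlocks₂₁)
            + D)) t)
    ∧ Φ₀ - ((NormedSpace.exp ((T - T) • Λ)).toBlocks₂₂)⁻¹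
        * (NormedSpace.exp ((T - T) • Λ)).toBlocks₂₁ = Φ₀ :=
  riccati_via_matrix_exponential_general A B C D Φ₀ Λ hΛ hdet
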